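/- For a heap-reducing system of inductive definitions Φ, every rogue model of Φ — a structure in (M_WSL ∩ M_fp(Φ)) ∖ (M_SL ∩ M_lfp(Φ)) — lies in (M_WSL ∖ M_SL) ∩ M_fp(Φ); and if such a rogue model extends the standard model of the background theory, its location domain must be infinite. -/
import Mathlib


set_option autoImplicit false

namespace WSLPaper

inductive Srt : Type
  | loc
  | bg
deriving DecidableEq

structure Sig : Type 1 where
  Const : Type
  constSort : Const → Srt
  Fn : Type
  fnAr : Fn → ℕ
  ThP : Type
  tpAr : ThP → ℕ
  IndP : Type
  ipAr : IndP → ℕ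
  ipSorts : (P : IndP) → Fin (ipAr P) → Srt
  recLen : ℕ
  recSorts : Fin recLen → Srt

variable {σ : Sig}

inductive Term (σ : Sig) : Srt → Type
  | var (s : Srt) (x : ℕ) : Term σ s
  | nil : Term σ .loc
  | const (c : σ.Const) : Term σ (σ.constSort c)
  | fn (f : σ.Fn) (args : Fin (σ.fnAr f) → Term σ .bg) : Term σ .bg

inductive SLFormula (σ : Sig) : Type
  | eq {s : Srt} (t₁ t₂ : Term σ s)
  | ne {s : Srt} (t₁ t₂ : Term σ s)
  | thp (Q : σ.ThP) (args : Fin (σ.tpAr Q) → Term σ .bg)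
  | nthp (Q : σ.ThP) (args : Fin (σ.tpAr Q) → Term σ .bg)
  | emp
  | pointsTo (t : Term σ .loc) (ts : (i : Fin σ.recLen) → Term σ (σ.recSorts i))
  | indp (P : σ.IndP) (args : (i : Fin (σ.ipAr P)) → Term σ (σ.ipSorts P i))
  | and (φ ψ : SLFormula σ)
  | or (φ ψ : SLFormula σ)
  | sep (φ ψ : SLFormula σ)
  | imp (φ ψ : SLFormula σ)
  | ex (s : Srt) (x : ℕ) (φ : SLFormula σ)
  | all (s : Srt) (x : ℕ) (φ : SLFormula σ)

/- ### Syntactic fragments -/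

/-- A term is theory-free if no theory function symbol occurs in it. -/
def Term.theoryFree : {s : Srt} → Term σ s → Prop
  | _, .fn _ _ => False
  | _, _ => True

/-- A formula is theory-free if no theory symbols occur in it. -/
def SLFormula.theoryFree : SLFormula σ → Prop
  | .eq t₁ t₂ => t₁.theoryFree ∧ t₂.theoryFree
  | .ne t₁ t₂ => t₁.theoryFree ∧ t₂.theoryFree
  | .thp _ _ => False
  | .nthp _ _ => False
  | .emp => True
  | .pointsTo t ts => t.theoryFree ∧ ∀ i, (ts i).theoryFree
  | .indp _ args => ∀ i, (args i).theoryFree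
  | .and φ ψ => φ.theoryFree ∧ ψ.theoryFree
  | .or φ ψ => φ.theoryFree ∧ ψ.theoryFree
  | .sep φ ψ => φ.theoryFree ∧ ψ.theoryFree
  | .imp φ ψ => φ.theoryFree ∧ ψ.theoryFree
  | .ex _ _ φ => φ.theoryFree
  | .all _ _ φ => φ.theoryFree

/-- A formula is quantifier-free if no quantifiers occur in it. -/
def SLFormula.quantFree : SLFormula σ → Prop
  | .and φ ψ => φ.quantFree ∧ ψ.quantFree
  | .or φ ψ => φ.quantFree ∧ ψ.quantFree
  | .sep φ ψ => φ.quantFree ∧ ψ.quantFree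
  | .imp φ ψ => φ.quantFree ∧ ψ.quantFree
  | .ex _ _ _ => False
  | .all _ _ _ => False
  | _ => True

/-- `imp`-free formulas: these are exactly the SL formulas of Definition 3.2
(`imp` is the extension used for fold/unfold axioms). -/
def SLFormula.impFree : SLFormula σ → Prop
  | .and φ ψ => φ.impFree ∧ ψ.impFree
  | .or φ ψ => φ.impFree ∧ ψ.impFree
  | .sep φ ψ => φ.impFree ∧ ψ.impFree
  | .imp _ _ => False
  | .ex _ _ φ => φ.impFree
  | .all _ _ φ => φ.impFree
  | _ => True

/-- Theory-free, quantifier-free SL formulas (of Definition 3.2). -/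
def SLFormula.PlainTFQF (φ : SLFormula σ) : Prop :=
  φ.theoryFree ∧ φ.quantFree ∧ φ.impFree

/-- Quantifier-free conjunctive formulas (no disjunctions, but both regular and
separating conjunctions). -/
def SLFormula.IsQFConj : SLFormula σ → Prop
  | .and φ ψ => φ.IsQFConj ∧ ψ.IsQFConj
  | .sep φ ψ => φ.IsQFConj ∧ ψ.IsQFConj
  | .or _ _ => False
  | .imp _ _ => False
  | .ex _ _ _ => False
  | .all _ _ _ => False
  | _ => True

/-- Universal conjunctive formulas: built from atoms with `∧`, `*` and `∀` only. -/
def SLFormula.IsUnivConj : SLFormula σ → Prop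
  | .and φ ψ => φ.IsUnivConj ∧ ψ.IsUnivConj
  | .sep φ ψ => φ.IsUnivConj ∧ ψ.IsUnivConj
  | .all _ _ φ => φ.IsUnivConj
  | .or _ _ => False
  | .imp _ _ => False
  | .ex _ _ _ => False
  | _ => True

/-- Universal closures of quantifier-free conjunctive formulas `∀u⃗.φ`. -/
inductive IsUCl : SLFormula σ → Prop
  | base {φ : SLFormula σ} : φ.IsQFConj → IsUCl φ
  | all {s : Srt} {x : ℕ} {φ : SLFormula σ} : IsUCl φ → IsUCl (.all s x φ)

/-- Disjunctions `⋁ᵢ ∀u⃗ᵢ.φᵢ` of universal closures of QF conjunctive formulas. -/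
inductive IsDisjUC : SLFormula σ → Prop
  | base {φ : SLFormula σ} : IsUCl φ → IsDisjUC φ
  | or {φ ψ : SLFormula σ} : IsDisjUC φ → IsDisjUC ψ → IsDisjUC (.or φ ψ)

/-- Effectively Determined-Heap (EDH) formulas: `∃y⃗. ⋁ᵢ ∀u⃗ᵢ. φᵢ`
with each `φᵢ` quantifier-free conjunctive. -/
inductive IsEDH : SLFormula σ → Prop
  | base {φ : SLFormula σ} : IsDisjUC φ → IsEDH φ
  | ex {s : Srt} {x : ℕ} {φ : SLFormula σ} : IsEDH φ → IsEDH (.ex s x φ)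

/-- All variables occurring in a term have index `< k`. -/
def Term.varsBelow (k : ℕ) : {s : Srt} → Term σ s → Prop
  | _, .var _ x => x < k
  | _, .nil => True
  | _, .const _ => True
  | _, .fn _ args => ∀ i, (args i).varsBelow k

/-- All variables occurring in a formula have index `< k` (the bound grows under binders;
this is only used for quantifier-free formulas, where it says that the free variables
are among the variables `0, …, k-1`). -/
def SLFormula.varsBelow (k : ℕ) : SLFormula σ → Prop
  | .eq t₁ t₂ => t₁.varsBelow k ∧ t₂.varsBelow k
  | .ne t₁ t₂ => t₁.varsBelow k ∧ t₂.varsBelow k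
  | .thp _ args => ∀ i, (args i).varsBelow k
  | .nthp _ args => ∀ i, (args i).varsBelow k
  | .emp => True
  | .pointsTo t ts => t.varsBelow k ∧ ∀ i, (ts i).varsBelow k
  | .indp _ args => ∀ i, (args i).varsBelow k
  | .and φ ψ => φ.varsBelow k ∧ ψ.varsBelow k
  | .or φ ψ => φ.varsBelow k ∧ ψ.varsBelow k
  | .sep φ ψ => φ.varsBelow k ∧ ψ.varsBelow k
  | .imp φ ψ => φ.varsBelow k ∧ ψ.varsBelow k
  | .ex _ x φ => φ.varsBelow (max k (x + 1))
  | .all _ x φ => φ.varsBelow (max k (x + 1))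

/-- The constant `c` occurs in the term. -/
def Term.usesConst (c : σ.Const) : {s : Srt} → Term σ s → Prop
  | _, .var _ _ => False
  | _, .nil => False
  | _, .const c' => c' = c
  | _, .fn _ args => ∃ i, (args i).usesConst c

/-- The constant `c` occurs in the formula. -/
def SLFormula.usesConst (c : σ.Const) : SLFormula σ → Prop
  | .eq t₁ t₂ => t₁.usesConst c ∨ t₂.usesConst c
  | .ne t₁ t₂ => t₁.usesConst c ∨ t₂.usesConst c
  | .thp _ args => ∃ i, (args i).usesConst c
  | .nthp _ args => ∃ i, (args i).usesConst c
  | .emp => False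
  | .pointsTo t ts => t.usesConst c ∨ ∃ i, (ts i).usesConst c
  | .indp _ args => ∃ i, (args i).usesConst c
  | .and φ ψ => φ.usesConst c ∨ ψ.usesConst c
  | .or φ ψ => φ.usesConst c ∨ ψ.usesConst c
  | .sep φ ψ => φ.usesConst c ∨ ψ.usesConst c
  | .imp φ ψ => φ.usesConst c ∨ ψ.usesConst c
  | .ex _ _ φ => φ.usesConst c
  | .all _ _ φ => φ.usesConst c

/-- Pure theory terms: built from (background-sorted) variables and theory functions only. -/
def Term.pureTheory : {s : Srt} → Term σ s → Prop
  | _, .var s _ => s = Srt.bg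
  | _, .nil => False
  | _, .const _ => False
  | _, .fn _ args => ∀ i, (args i).pureTheory

/-- Pure theory formulas (in negation normal form): first-order formulas over `Σ_T`,
presented in SL syntax.  These serve as the sentences of the theory axiomatization `Γ_T`. -/
def SLFormula.pureTheory : SLFormula σ → Prop
  | .eq t₁ t₂ => t₁.pureTheory ∧ t₂.pureTheory
  | .ne t₁ t₂ => t₁.pureTheory ∧ t₂.pureTheory
  | .thp _ args => ∀ i, (args i).pureTheory
  | .nthp _ args => ∀ i, (args i).pureTheory
  | .and φ ψ => φ.pureTheory ∧ ψ.pureTheory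
  | .or φ ψ => φ.pureTheory ∧ ψ.pureTheory
  | .ex s _ φ => s = Srt.bg ∧ φ.pureTheory
  | .all s _ φ => s = Srt.bg ∧ φ.pureTheory
  | _ => False


def Assign (Dom : Srt → Type) : Type := ℕ → (s : Srt) → Dom s

def Assign.upd {Dom : Srt → Type} (v : Assign Dom) (x : ℕ) (s : Srt) (d : Dom s) :
    Assign Dom :=
  fun y s' => if h : y = x ∧ s' = s then (h.2.symm ▸ d) else v y s'

/-- A heap structure `M = (D, h, I)` over `Σ` (with domain family `Dom`). -/
structure HeapStructure (σ : Sig) (Dom : Srt → Type) where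
  null : Dom .loc
  nonemptyBg : Nonempty (Dom .bg)
  /-- the heap `h`, mapping locations to records (its value on `null` is irrelevant) -/
  heap : Dom .loc → (i : Fin σ.recLen) → Dom (σ.recSorts i)
  constI : (c : σ.Const) → Dom (σ.constSort c)
  fnI : (f : σ.Fn) → (Fin (σ.fnAr f) → Dom .bg) → Dom .bg
  thI : (Q : σ.ThP) → (Fin (σ.tpAr Q) → Dom .bg) → Prop
  /-- interpretation of inductive predicates: tuples of elements together with a heaplet -/
  indI : (P : σ.IndP) → ((i : Fin (σ.ipAr P)) → Dom (σ.ipSorts P i)) → Set (Dom .loc) → Prop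

variable {Dom : Srt → Type}

def HeapStructure.nonemptyDom (M : HeapStructure σ Dom) : (s : Srt) → Nonempty (Dom s)
  | .loc => ⟨M.null⟩
  | .bg => M.nonemptyBg

noncomputable def HeapStructure.d0 (M : HeapStructure σ Dom) : (s : Srt) → Dom s :=
  fun s => Classical.choice (M.nonemptyDom s)

def Term.eval (M : HeapStructure σ Dom) (v : Assign Dom) : {s : Srt} → Term σ s → Dom s
  | _, .var s x => v x s
  | _, .nil => M.null
  | _, .const c => M.constI c
  | _, .fn f args => M.fnI f (fun i => (args i).eval M v)

/-- The satisfaction relation `M, v, η ⊨ φ` (Definition 3.3, Figure 2),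
extended to `imp` in the obvious way. -/
def sat (M : HeapStructure σ Dom) : SLFormula σ → Assign Dom → Set (Dom .loc) → Prop
  | .eq t₁ t₂, v, η => t₁.eval M v = t₂.eval M v ∧ η = ∅
  | .ne t₁ t₂, v, η => t₁.eval M v ≠ t₂.eval M v ∧ η = ∅
  | .thp Q args, v, η => M.thI Q (fun i => (args i).eval M v) ∧ η = ∅
  | .nthp Q args, v, η => ¬ M.thI Q (fun i => (args i).eval M v) ∧ η = ∅
  | .emp, _, η => η = ∅
  | .pointsTo t ts, v, η =>
      t.eval M v ≠ M.null ∧ (∀ i, M.heap (t.eval M v) i = (ts i).eval M v) ∧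
        η = {t.eval M v}
  | .indp P args, v, η => M.indI P (fun i => (args i).eval M v) η
  | .and φ ψ, v, η => sat M φ v η ∧ sat M ψ v η
  | .or φ ψ, v, η => sat M φ v η ∨ sat M ψ v η
  | .sep φ ψ, v, η => ∃ η₁ η₂, η = η₁ ∪ η₂ ∧ η₁ ∩ η₂ = ∅ ∧ sat M φ v η₁ ∧ sat M ψ v η₂
  | .imp φ ψ, v, η => sat M φ v η → sat M ψ v η
  | .ex s x φ, v, η => ∃ d : Dom s, sat M φ (v.upd x s d) η
  | .all s x φ, v, η => ∀ d : Dom s, sat M φ (v.upd x s d) η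


/- ### Systems of inductive definitions -/

/-- A system of inductive definitions (Definition 3.4):
`Φ(P)(x⃗) = ∃y⃗. ⋁_j ρ^P_j(x⃗, y⃗)` where each `ρ^P_j` is quantifier-free conjunctive.
By convention, the parameters `x⃗` of `P` are the variables `0, …, ipAr P - 1`
(at the sorts `ipSorts P`) and the existentially quantified variables `y⃗` are
`ipAr P, …, ipAr P + nEx P - 1` (at the sorts `exSorts P`). -/
structure SID (σ : Sig) where
  nEx : σ.IndP → ℕ
  exSorts : (P : σ.IndP) → Fin (nEx P) → Srt
  nCases : σ.IndP → ℕ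
  body : (P : σ.IndP) → Fin (nCases P) → SLFormula σ
  body_conj : ∀ P j, (body P j).IsQFConj
  body_vars : ∀ P j, (body P j).varsBelow (σ.ipAr P + nEx P)

/-- A candidate interpretation of the inductive predicates. -/
def Interp (σ : Sig) (Dom : Srt → Type) : Type :=
  (P : σ.IndP) → ((i : Fin (σ.ipAr P)) → Dom (σ.ipSorts P i)) → Set (Dom .loc) → Prop

/-- `M[P⃗ ↦ I⃗]`: reinterpretation of the inductive predicates. -/
def HeapStructure.reinterp (M : HeapStructure σ Dom) (I : Interp σ Dom) :
    HeapStructure σ Dom :=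
  { M with indI := I }

/-- The assignment sending the parameters `x⃗` of `P` to `xs` and the existential
variables `y⃗` to `ys` (and everything else to a default). -/
def SID.asgn (Φ : SID σ) (d0 : (s : Srt) → Dom s) (P : σ.IndP)
    (xs : (i : Fin (σ.ipAr P)) → Dom (σ.ipSorts P i))
    (ys : (j : Fin (Φ.nEx P)) → Dom (Φ.exSorts P j)) : Assign Dom :=
  fun n s =>
    if h : n < σ.ipAr P then
      if hs : σ.ipSorts P ⟨n, h⟩ = s then hs ▸ xs ⟨n, h⟩ else d0 s
    else if h2 : n - σ.ipAr P < Φ.nEx P then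
      if hs : Φ.exSorts P ⟨n - σ.ipAr P, h2⟩ = s then hs ▸ ys ⟨n - σ.ipAr P, h2⟩ else d0 s
    else d0 s

/-- The monotone transformer `Φ^M` induced by a system of inductive definitions
(Definition 3.5). -/
noncomputable def SID.step (Φ : SID σ) (M : HeapStructure σ Dom) (I : Interp σ Dom) :
    Interp σ Dom :=
  fun P xs η =>
    ∃ (j : Fin (Φ.nCases P)) (ys : (j' : Fin (Φ.nEx P)) → Dom (Φ.exSorts P j')),
      sat (M.reinterp I) (Φ.body P j) (Φ.asgn M.d0 P xs ys) η

/-- `M` is a fixpoint (`fp`) structure for `Φ`. -/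
def SID.IsFP (Φ : SID σ) (M : HeapStructure σ Dom) : Prop :=
  ∀ P xs η, M.indI P xs η ↔ Φ.step M M.indI P xs η

/-- `M` is a least-fixpoint (`lfp`) structure for `Φ`: its interpretation of the
inductive predicates is the least fixpoint of `Φ^M`. -/
def SID.IsLFP (Φ : SID σ) (M : HeapStructure σ Dom) : Prop :=
  Φ.IsFP M ∧ ∀ I : Interp σ Dom, (∀ P xs η, I P xs η ↔ Φ.step M I P xs η) →
    ∀ P xs η, M.indI P xs η → I P xs η


/- ### Background theories and the model classes of SL and WSL -/

/-- Determined-heap structures (Definition 3.6): every inductive predicate relates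
every tuple of elements to at most one heaplet. -/
def DeterminedHeap (M : HeapStructure σ Dom) : Prop :=
  ∀ (P : σ.IndP) (xs : (i : Fin (σ.ipAr P)) → Dom (σ.ipSorts P i))
    (η₁ η₂ : Set (Dom .loc)), M.indI P xs η₁ → M.indI P xs η₂ → η₁ = η₂

/-- A background theory `T = (Σ_T, M_T, Γ_T)`: the standard model `M_T`
(given by `StdBg`, `stdFn`, `stdTh`) and the axiomatization `Γ_T` (`Ax`),
a set of pure-theory first-order sentences. -/
structure BackgroundTheory (σ : Sig) where
  StdBg : Type
  stdNonempty : Nonempty StdBg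
  stdFn : (f : σ.Fn) → (Fin (σ.fnAr f) → StdBg) → StdBg
  stdTh : (Q : σ.ThP) → (Fin (σ.tpAr Q) → StdBg) → Prop
  Ax : Set (SLFormula σ)
  ax_pure : ∀ φ ∈ Ax, φ.pureTheory

def BackgroundTheory.stdDom (T : BackgroundTheory σ) : Srt → Type
  | .loc => PUnit
  | .bg => T.StdBg

noncomputable def BackgroundTheory.stdDefault (T : BackgroundTheory σ) :
    (s : Srt) → T.stdDom s
  | .loc => PUnit.unit
  | .bg => Classical.choice T.stdNonempty

/-- The standard model `M_T`, viewed as a (trivial-heap) structure. -/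
noncomputable def BackgroundTheory.stdHeap (T : BackgroundTheory σ) :
    HeapStructure σ T.stdDom where
  null := PUnit.unit
  nonemptyBg := T.stdNonempty
  heap := fun _ i => T.stdDefault (σ.recSorts i)
  constI := fun c => T.stdDefault (σ.constSort c)
  fnI := T.stdFn
  thI := T.stdTh
  indI := fun _ _ _ => False

/-- Soundness of the axiomatization: `M_T ⊨ Γ_T`. -/
def BackgroundTheory.Sound (T : BackgroundTheory σ) : Prop :=
  ∀ φ ∈ T.Ax, ∀ v : Assign T.stdDom, sat T.stdHeap φ v ∅

/-- `M` satisfies the theory axiomatization `Γ_T`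
(under SL satisfaction with the empty heaplet). -/
def SatAx (T : BackgroundTheory σ) (M : HeapStructure σ Dom) : Prop :=
  ∀ φ ∈ T.Ax, ∀ v : Assign Dom, sat M φ v ∅

/-- `M` extends the standard model `M_T` of the theory: its background part is
isomorphic to `M_T`. -/
def ExtendsStd (T : BackgroundTheory σ) (M : HeapStructure σ Dom) : Prop :=
  ∃ e : Dom .bg ≃ T.StdBg,
    (∀ (f : σ.Fn) (args : Fin (σ.fnAr f) → Dom .bg),
        e (M.fnI f args) = T.stdFn f (fun i => e (args i))) ∧
    (∀ (Q : σ.ThP) (args : Fin (σ.tpAr Q) → Dom .bg),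
        M.thI Q args ↔ T.stdTh Q (fun i => e (args i)))

/-- `M ∈ M_SL`: determined-heap, heap-finite, and extends the standard theory model. -/
def InSL (T : BackgroundTheory σ) (M : HeapStructure σ Dom) : Prop :=
  DeterminedHeap M ∧ Finite (Dom .loc) ∧ ExtendsStd T M

/-- `M ∈ M_WSL`: determined-heap (heap-finite or infinite) and satisfies `Γ_T`. -/
def InWSL (T : BackgroundTheory σ) (M : HeapStructure σ Dom) : Prop :=
  DeterminedHeap M ∧ SatAx T M

def SatAll (M : HeapStructure σ Dom) (Γ : List (SLFormula σ)) (v : Assign Dom)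
    (η : Set (Dom .loc)) : Prop :=
  ∀ γ ∈ Γ, sat M γ v η

/-- Plain SL entailment `Γ ⊢_SL ψ` (Definition 3.7). -/
def ValidSL (T : BackgroundTheory σ) (Γ : List (SLFormula σ)) (ψ : SLFormula σ) : Prop :=
  ∀ (Dom : Srt → Type) (M : HeapStructure σ Dom) (v : Assign Dom) (η : Set (Dom Srt.loc)),
    InSL T M → SatAll M Γ v η → sat M ψ v η

/-- SL entailment modulo a SID, `Γ ⊢_SL^Φ ψ`. -/
def ValidSLmod (T : BackgroundTheory σ) (Φ : SID σ) (Γ : List (SLFormula σ))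
    (ψ : SLFormula σ) : Prop :=
  ∀ (Dom : Srt → Type) (M : HeapStructure σ Dom) (v : Assign Dom) (η : Set (Dom Srt.loc)),
    InSL T M → Φ.IsLFP M → SatAll M Γ v η → sat M ψ v η

/-- Plain WSL entailment `Γ ⊢_WSL ψ` (Definition 3.8). -/
def ValidWSL (T : BackgroundTheory σ) (Γ : List (SLFormula σ)) (ψ : SLFormula σ) : Prop :=
  ∀ (Dom : Srt → Type) (M : HeapStructure σ Dom) (v : Assign Dom) (η : Set (Dom Srt.loc)),
    InWSL T M → SatAll M Γ v η → sat M ψ v η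

/-- WSL entailment modulo a SID, `Γ ⊢_WSL^Φ ψ`. -/
def ValidWSLmod (T : BackgroundTheory σ) (Φ : SID σ) (Γ : List (SLFormula σ))
    (ψ : SLFormula σ) : Prop :=
  ∀ (Dom : Srt → Type) (M : HeapStructure σ Dom) (v : Assign Dom) (η : Set (Dom Srt.loc)),
    InWSL T M → Φ.IsFP M → SatAll M Γ v η → sat M ψ v η

/- ### First-order structures over the FO-corresponding vocabulary `F(Σ)` -/

/-- A first-order structure over `F(Σ)`: the constants and theory symbols of `Σ`,
unary functions `m_i : σ* → s_i` replacing the heap, and relations `P_fo`, `P_η`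
for every inductive predicate `P`. -/
structure FOStructure (σ : Sig) (Dom : Srt → Type) where
  null : Dom .loc
  nonemptyBg : Nonempty (Dom .bg)
  constI : (c : σ.Const) → Dom (σ.constSort c)
  fnI : (f : σ.Fn) → (Fin (σ.fnAr f) → Dom .bg) → Dom .bg
  thI : (Q : σ.ThP) → (Fin (σ.tpAr Q) → Dom .bg) → Prop
  m : (i : Fin σ.recLen) → Dom .loc → Dom (σ.recSorts i)
  Pfo : (P : σ.IndP) → ((i : Fin (σ.ipAr P)) → Dom (σ.ipSorts P i)) → Prop
  Peta : (P : σ.IndP) → ((i : Fin (σ.ipAr P)) → Dom (σ.ipSorts P i)) → Dom .loc → Prop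

def FOStructure.nonemptyDom (Mf : FOStructure σ Dom) : (s : Srt) → Nonempty (Dom s)
  | .loc => ⟨Mf.null⟩
  | .bg => Mf.nonemptyBg

noncomputable def FOStructure.d0 (Mf : FOStructure σ Dom) : (s : Srt) → Dom s :=
  fun s => Classical.choice (Mf.nonemptyDom s)

def Term.evalF (Mf : FOStructure σ Dom) (v : Assign Dom) : {s : Srt} → Term σ s → Dom s
  | _, .var s x => v x s
  | _, .nil => Mf.null
  | _, .const c => Mf.constI c
  | _, .fn f args => Mf.fnI f (fun i => (args i).evalF Mf v)

/-- Structure correspondence (Definition 4.10): a heap structure `M` over `Σ` and a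
first-order structure `M_fo` over `F(Σ)` with the same domains correspond when they
agree on theory symbols and constants, the heap is given by the functions `m_i`,
and each inductive predicate is represented by the pair `P_fo`, `P_η`. -/
def Corresponds (M : HeapStructure σ Dom) (Mf : FOStructure σ Dom) : Prop :=
  Mf.null = M.null ∧
  (∀ c, Mf.constI c = M.constI c) ∧
  (∀ (f : σ.Fn) (args : Fin (σ.fnAr f) → Dom .bg), Mf.fnI f args = M.fnI f args) ∧
  (∀ (Q : σ.ThP) (args : Fin (σ.tpAr Q) → Dom .bg), Mf.thI Q args ↔ M.thI Q args) ∧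
  (∀ (d : Dom .loc) (i : Fin σ.recLen), M.heap d i = Mf.m i d) ∧
  (∀ (P : σ.IndP) (xs : (i : Fin (σ.ipAr P)) → Dom (σ.ipSorts P i)) (η : Set (Dom .loc)),
      M.indI P xs η ↔ (Mf.Pfo P xs ∧ η = {d | Mf.Peta P xs d}))

/-- The heaplet `⟦φ⟧^{M_fo}_v` encoded by the heaplet-formula `φ_η` of the
first-order translation (Table 1 / Definition 4.13), rendered semantically:
`⟦φ⟧^{M_fo}_v = { d | M_fo, v[x* ↦ d] ⊨ φ_η }`. -/
def foEta (Mf : FOStructure σ Dom) : SLFormula σ → Assign Dom → Set (Dom Srt.loc)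
  | .pointsTo t _, v => {Term.evalF Mf v t}
  | .indp P args, v => {d | Mf.Peta P (fun i => (args i).evalF Mf v) d}
  | .and φ _, v => foEta Mf φ v
  | .sep φ ψ, v => foEta Mf φ v ∪ foEta Mf ψ v
  | .all _ _ φ, v => foEta Mf φ v
  | _, _ => ∅

/-- First-order satisfaction of the translation `φ_fo` (Table 1), rendered
semantically: `foSat Mf φ v` holds iff `M_fo, v ⊨ φ_fo`.
(On `or`, `imp` and `ex` — which do not occur in universal conjunctive formulas —
this is ordinary first-order satisfaction, as appropriate e.g. for pure theory
sentences of `Γ_T`.) -/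
def foSat (Mf : FOStructure σ Dom) : SLFormula σ → Assign Dom → Prop
  | .eq t₁ t₂, v => t₁.evalF Mf v = t₂.evalF Mf v
  | .ne t₁ t₂, v => t₁.evalF Mf v ≠ t₂.evalF Mf v
  | .thp Q args, v => Mf.thI Q (fun i => (args i).evalF Mf v)
  | .nthp Q args, v => ¬ Mf.thI Q (fun i => (args i).evalF Mf v)
  | .emp, _ => True
  | .pointsTo t ts, v =>
      t.evalF Mf v ≠ Mf.null ∧ ∀ i, (ts i).evalF Mf v = Mf.m i (t.evalF Mf v)
  | .indp P args, v => Mf.Pfo P (fun i => (args i).evalF Mf v)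
  | .and φ ψ, v => foSat Mf φ v ∧ foSat Mf ψ v ∧ foEta Mf φ v = foEta Mf ψ v
  | .or φ ψ, v => foSat Mf φ v ∨ foSat Mf ψ v
  | .sep φ ψ, v => foSat Mf φ v ∧ foSat Mf ψ v ∧ foEta Mf φ v ∩ foEta Mf ψ v = ∅
  | .imp φ ψ, v => foSat Mf φ v → foSat Mf ψ v
  | .ex s x φ, v => ∃ d : Dom s, foSat Mf φ (v.upd x s d)
  | .all s x φ, v =>
      (∀ d : Dom s, foSat Mf φ (v.upd x s d)) ∧
      (∀ d₁ d₂ : Dom s, foEta Mf φ (v.upd x s d₁) = foEta Mf φ (v.upd x s d₂))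

/-- `M_fo` satisfies the theory axiomatization `Γ_T` (first-order satisfaction). -/
def FoSatAx (T : BackgroundTheory σ) (Mf : FOStructure σ Dom) : Prop :=
  ∀ φ ∈ T.Ax, ∀ v : Assign Dom, foSat Mf φ v

/-- `M_fo ⊨ Φ_fo`: the first-order encoding of the system of inductive definitions
(Definition 4.16), rendered semantically.  For each inductive predicate `P`:
`∀x⃗. (P_fo(x⃗) ↔ ∃y⃗. ⋁_j (ρ^P_j)_fo) ∧ (∀y⃗. ⋀_j ((ρ^P_j)_fo → ∀x*. P_η(x⃗,x*) ↔ (ρ^P_j)_η))`. -/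
def SatSystemFO (Mf : FOStructure σ Dom) (Φ : SID σ) : Prop :=
  ∀ (P : σ.IndP) (xs : (i : Fin (σ.ipAr P)) → Dom (σ.ipSorts P i)),
    (Mf.Pfo P xs ↔
      ∃ (j : Fin (Φ.nCases P)) (ys : (j' : Fin (Φ.nEx P)) → Dom (Φ.exSorts P j')),
        foSat Mf (Φ.body P j) (Φ.asgn Mf.d0 P xs ys)) ∧
    (∀ (j : Fin (Φ.nCases P)) (ys : (j' : Fin (Φ.nEx P)) → Dom (Φ.exSorts P j')),
        foSat Mf (Φ.body P j) (Φ.asgn Mf.d0 P xs ys) →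
        {d | Mf.Peta P xs d} = foEta Mf (Φ.body P j) (Φ.asgn Mf.d0 P xs ys))


/- ### Substitution and fold/unfold axioms -/

def Term.subst (sub : (s : Srt) → ℕ → Term σ s) : {s : Srt} → Term σ s → Term σ s
  | _, .var s x => sub s x
  | _, .nil => .nil
  | _, .const c => .const c
  | _, .fn f args => .fn f (fun i => (args i).subst sub)

/-- (Capture-ignoring) substitution; it is only applied to quantifier-free formulas,
where it is exact. -/
def SLFormula.subst (sub : (s : Srt) → ℕ → Term σ s) : SLFormula σ → SLFormula σ
  | .eq t₁ t₂ => .eq (t₁.subst sub) (t₂.subst sub)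
  | .ne t₁ t₂ => .ne (t₁.subst sub) (t₂.subst sub)
  | .thp Q args => .thp Q (fun i => (args i).subst sub)
  | .nthp Q args => .nthp Q (fun i => (args i).subst sub)
  | .emp => .emp
  | .pointsTo t ts => .pointsTo (t.subst sub) (fun i => (ts i).subst sub)
  | .indp P args => .indp P (fun i => (args i).subst sub)
  | .and φ ψ => .and (φ.subst sub) (ψ.subst sub)
  | .or φ ψ => .or (φ.subst sub) (ψ.subst sub)
  | .sep φ ψ => .sep (φ.subst sub) (ψ.subst sub)
  | .imp φ ψ => .imp (φ.subst sub) (ψ.subst sub)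
  | .ex s x φ => .ex s x (φ.subst sub)
  | .all s x φ => .all s x (φ.subst sub)

/-- The substitution `[x⃗ ↦ t⃗, y⃗ ↦ u⃗]` for the parameters and existential variables
of the definition of `P` in `Φ`. -/
def SID.instSub (Φ : SID σ) (P : σ.IndP)
    (ts : (i : Fin (σ.ipAr P)) → Term σ (σ.ipSorts P i))
    (us : (j : Fin (Φ.nEx P)) → Term σ (Φ.exSorts P j)) : (s : Srt) → ℕ → Term σ s :=
  fun s n =>
    if h : n < σ.ipAr P then
      if hs : σ.ipSorts P ⟨n, h⟩ = s then hs ▸ ts ⟨n, h⟩ else .var s n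
    else if h2 : n - σ.ipAr P < Φ.nEx P then
      if hs : Φ.exSorts P ⟨n - σ.ipAr P, h2⟩ = s then hs ▸ us ⟨n - σ.ipAr P, h2⟩
      else .var s n
    else .var s n

/-- A formula that is satisfied by every structure, assignment and heaplet. -/
def trueF : SLFormula σ := .imp .emp .emp
/-- A formula that is satisfied by no structure, assignment and heaplet. -/
def falseF : SLFormula σ := .ne Term.nil Term.nil

def bigAnd : List (SLFormula σ) → SLFormula σ
  | [] => trueF
  | [φ] => φ
  | φ :: rest => .and φ (bigAnd rest)

def bigOr : List (SLFormula σ) → SLFormula σ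
  | [] => falseF
  | [φ] => φ
  | φ :: rest => .or φ (bigOr rest)

/-- The fold axiom `fold(Φ(P), t⃗, t⃗') = ⋀_j (ρ^P_j[x⃗↦t⃗, y⃗↦t⃗'] → P(t⃗))`
(Definition 5.1). -/
def SID.foldAx (Φ : SID σ) (P : σ.IndP)
    (ts : (i : Fin (σ.ipAr P)) → Term σ (σ.ipSorts P i))
    (us : (j : Fin (Φ.nEx P)) → Term σ (Φ.exSorts P j)) : SLFormula σ :=
  bigAnd ((List.finRange (Φ.nCases P)).map fun j =>
    .imp ((Φ.body P j).subst (Φ.instSub P ts us)) (.indp P ts))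

/-- The constant `c` occurs in (a body of) `Φ`. -/
def SID.usesConst (Φ : SID σ) (c : σ.Const) : Prop :=
  ∃ P j, (Φ.body P j).usesConst c

/-- The unfold axiom `unfold(Φ(P), t⃗, c⃗) = P(t⃗) → ⋁_j ρ^P_j[x⃗↦t⃗, y⃗↦c⃗]`
with fresh constants `c⃗` (Definition 5.1). -/
def SID.unfoldAx (Φ : SID σ) (P : σ.IndP)
    (ts : (i : Fin (σ.ipAr P)) → Term σ (σ.ipSorts P i))
    (cs : (j : Fin (Φ.nEx P)) → σ.Const)
    (hs : ∀ j, σ.constSort (cs j) = Φ.exSorts P j) : SLFormula σ :=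
  .imp (.indp P ts) (bigOr ((List.finRange (Φ.nCases P)).map fun j =>
    (Φ.body P j).subst (Φ.instSub P ts (fun j' => (hs j') ▸ Term.const (cs j')))))

/-- Fold/unfold axioms of a SID `Φ`.  In unfold axioms, the constants `c⃗` are fresh
(they do not occur in `Φ`). -/
inductive FUAxiom (σ : Sig) (Φ : SID σ) : Type
  | fold (P : σ.IndP) (ts : (i : Fin (σ.ipAr P)) → Term σ (σ.ipSorts P i))
      (us : (j : Fin (Φ.nEx P)) → Term σ (Φ.exSorts P j))
  | unfold (P : σ.IndP) (ts : (i : Fin (σ.ipAr P)) → Term σ (σ.ipSorts P i))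
      (cs : (j : Fin (Φ.nEx P)) → σ.Const)
      (hs : ∀ j, σ.constSort (cs j) = Φ.exSorts P j)
      (hfresh : ∀ j, ¬ Φ.usesConst (cs j))

def FUAxiom.toFormula {Φ : SID σ} : FUAxiom σ Φ → SLFormula σ
  | .fold P ts us => Φ.foldAx P ts us
  | .unfold P ts cs hs _ => Φ.unfoldAx P ts cs hs

/-- The fresh constants introduced by a fold/unfold axiom. -/
def FUAxiom.freshConst {Φ : SID σ} : FUAxiom σ Φ → σ.Const → Prop
  | .fold _ _ _, _ => False
  | .unfold _ _ cs _ _, c => ∃ j, cs j = c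

/-- The fresh constants of the axiom do not occur in `χ`. -/
def FUAxiom.FreshFor {Φ : SID σ} (a : FUAxiom σ Φ) (χ : SLFormula σ) : Prop :=
  ∀ c, a.freshConst c → ¬ χ.usesConst c

/-- First-order satisfaction of the encodings `fold_fo` / `unfold_fo` of fold/unfold
axioms (Definition 5.9), rendered semantically. -/
def axSatFO {Φ : SID σ} (Mf : FOStructure σ Dom) (v : Assign Dom) : FUAxiom σ Φ → Prop
  | .fold P ts us => ∀ j : Fin (Φ.nCases P),
      foSat Mf ((Φ.body P j).subst (Φ.instSub P ts us)) v →
        (Mf.Pfo P (fun i => (ts i).evalF Mf v) ∧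
          {d | Mf.Peta P (fun i => (ts i).evalF Mf v) d} =
            foEta Mf ((Φ.body P j).subst (Φ.instSub P ts us)) v)
  | .unfold P ts cs hs _ =>
      Mf.Pfo P (fun i => (ts i).evalF Mf v) →
        ∃ j : Fin (Φ.nCases P),
          foSat Mf ((Φ.body P j).subst
            (Φ.instSub P ts (fun j' => (hs j') ▸ Term.const (cs j')))) v ∧
          {d | Mf.Peta P (fun i => (ts i).evalF Mf v) d} =
            foEta Mf ((Φ.body P j).subst
              (Φ.instSub P ts (fun j' => (hs j') ▸ Term.const (cs j')))) v

/-- An abstract fold/unfold proof mechanism (Definition 5.3): an exhaustive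
enumeration of finite sets of fold/unfold axioms. -/
structure FUMechanism (σ : Sig) (Φ : SID σ) where
  enum : ℕ → List (FUAxiom σ Φ)
  exhaustive : ∀ U : List (FUAxiom σ Φ), ∃ i, ∀ a ∈ U, a ∈ enum i

/-- The mechanism returns ''valid'' on `Γ ⊢ ψ`: for some enumerated set `U_i` of
fold/unfold axioms, the entailment `Γ ∪ U_i ⊢_SL ψ` is valid. -/
def FUMechanism.proves {Φ : SID σ} (mech : FUMechanism σ Φ) (T : BackgroundTheory σ)
    (Γ : List (SLFormula σ)) (ψ : SLFormula σ) : Prop :=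
  ∃ i, ValidSL T (Γ ++ (mech.enum i).map FUAxiom.toFormula) ψ

/-- The variant of the mechanism that checks `Γ ∪ U_i ⊢_WSL ψ`
(equivalently, by Claim 3.1 extended with fold/unfold axioms). -/
def FUMechanism.provesW {Φ : SID σ} (mech : FUMechanism σ Φ) (T : BackgroundTheory σ)
    (Γ : List (SLFormula σ)) (ψ : SLFormula σ) : Prop :=
  ∃ i, ValidWSL T (Γ ++ (mech.enum i).map FUAxiom.toFormula) ψ

/-- `Φ` is theory-free: no theory symbols occur in its bodies. -/
def SID.TheoryFree (Φ : SID σ) : Prop := ∀ P j, (Φ.body P j).theoryFree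

/-- Fresh constants are always available: for every sort there are infinitely many
constants of that sort not occurring in `Φ`, `Γ` or `ψ` (the standing assumption
that the vocabulary can always be extended with fresh constants). -/
def FreshSupply (Φ : SID σ) (Γ : List (SLFormula σ)) (ψ : SLFormula σ) : Prop :=
  ∀ s : Srt, ∃ f : ℕ → σ.Const, Function.Injective f ∧
    ∀ n, σ.constSort (f n) = s ∧ ¬ Φ.usesConst (f n) ∧
      (∀ γ ∈ Γ, ¬ γ.usesConst (f n)) ∧ ¬ ψ.usesConst (f n)

/- ### EDH entailments and their encoding -/

/-- `∃u⃗.φ` for a list of (sorted) variables `u⃗`. -/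
def mkExList : List (Srt × ℕ) → SLFormula σ → SLFormula σ
  | [], φ => φ
  | (s, x) :: rest, φ => .ex s x (mkExList rest φ)

/-- `v'` extends `v` on the variables `u⃗` (agreeing elsewhere). -/
def AssignExt (us : List (Srt × ℕ)) (v v' : Assign Dom) : Prop :=
  ∀ (x : ℕ) (s : Srt), (s, x) ∉ us → v' x s = v x s

/- ### Heap-reducing systems -/

/-- The formula contains an application of an inductive predicate. -/
def SLFormula.containsIndP : SLFormula σ → Prop
  | .indp _ _ => True
  | .and φ ψ => φ.containsIndP ∨ ψ.containsIndP
  | .or φ ψ => φ.containsIndP ∨ ψ.containsIndP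
  | .sep φ ψ => φ.containsIndP ∨ ψ.containsIndP
  | .imp φ ψ => φ.containsIndP ∨ ψ.containsIndP
  | .ex _ _ φ => φ.containsIndP
  | .all _ _ φ => φ.containsIndP
  | _ => False

/-- Heap-reducing systems of inductive definitions (Definition 6.1): every case
either contains no inductive predicates, or is equivalent to `t ↦ (…) * χ`. -/
def HeapReducing (Φ : SID σ) : Prop :=
  ∀ P j, ¬ (Φ.body P j).containsIndP ∨
    ∃ (t : Term σ .loc) (ts : (i : Fin σ.recLen) → Term σ (σ.recSorts i))
      (χ : SLFormula σ),
      ∀ (Dom : Srt → Type) (M : HeapStructure σ Dom) (v : Assign Dom)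
        (η : Set (Dom Srt.loc)),
        sat M (Φ.body P j) v η ↔ sat M (.sep (.pointsTo t ts) χ) v η


@[simp] theorem HeapStructure.reinterp_null {σ : Sig} {Dom : Srt → Type}
    (M : HeapStructure σ Dom) (I : Interp σ Dom) : (M.reinterp I).null = M.null := rfl
@[simp] theorem HeapStructure.reinterp_heap {σ : Sig} {Dom : Srt → Type}
    (M : HeapStructure σ Dom) (I : Interp σ Dom) : (M.reinterp I).heap = M.heap := rfl
@[simp] theorem HeapStructure.reinterp_thI {σ : Sig} {Dom : Srt → Type}
    (M : HeapStructure σ Dom) (I : Interp σ Dom) : (M.reinterp I).thI = M.thI := rfl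
@[simp] theorem HeapStructure.reinterp_indI {σ : Sig} {Dom : Srt → Type}
    (M : HeapStructure σ Dom) (I : Interp σ Dom) : (M.reinterp I).indI = I := rfl

theorem Term.eval_reinterp {σ : Sig} {Dom : Srt → Type} (M : HeapStructure σ Dom)
    (I : Interp σ Dom) (v : Assign Dom) : ∀ {s : Srt} (t : Term σ s),
    t.eval (M.reinterp I) v = t.eval M v := by
  intro s t
  induction t with
  | var => rfl
  | nil => rfl
  | const => rfl
  | fn f args ih =>
    simp only [Term.eval]
    exact congrArg _ (funext ih)

/-- Satisfaction of a formula without inductive predicate applications is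
independent of the interpretation of inductive predicates. -/
theorem sat_noind {σ : Sig} {Dom : Srt → Type} (M : HeapStructure σ Dom)
    (I1 I2 : Interp σ Dom) (φ : SLFormula σ) (hφ : ¬ φ.containsIndP) :
    ∀ (v : Assign Dom) (η : Set (Dom Srt.loc)),
      sat (M.reinterp I1) φ v η ↔ sat (M.reinterp I2) φ v η := by
  induction φ with
  | eq t₁ t₂ => intro v η; simp [sat, Term.eval_reinterp]
  | ne t₁ t₂ => intro v η; simp [sat, Term.eval_reinterp]
  | thp Q args => intro v η; simp [sat, Term.eval_reinterp]
  | nthp Q args => intro v η; simp [sat, Term.eval_reinterp]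
  | emp => intro v η; simp [sat]
  | pointsTo t ts => intro v η; simp [sat, Term.eval_reinterp]
  | indp P args => exact absurd trivial hφ
  | and φ ψ ih1 ih2 =>
    have h := not_or.mp hφ
    intro v η
    exact and_congr (ih1 h.1 v η) (ih2 h.2 v η)
  | or φ ψ ih1 ih2 =>
    have h := not_or.mp hφ
    intro v η
    exact or_congr (ih1 h.1 v η) (ih2 h.2 v η)
  | sep φ ψ ih1 ih2 =>
    have h := not_or.mp hφ
    intro v η
    exact exists_congr fun η₁ => exists_congr fun η₂ =>
      and_congr Iff.rfl (and_congr Iff.rfl (and_congr (ih1 h.1 v η₁) (ih2 h.2 v η₂)))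
  | imp φ ψ ih1 ih2 =>
    have h := not_or.mp hφ
    intro v η
    exact imp_congr (ih1 h.1 v η) (ih2 h.2 v η)
  | ex s x φ ih =>
    intro v η
    exact exists_congr fun d => ih hφ _ η
  | all s x φ ih =>
    intro v η
    exact forall_congr' fun d => ih hφ _ η

/-- Satisfaction at heaplet `η` only depends on the interpretation of inductive
predicates at sub-heaplets of `η`. -/
theorem sat_reinterp_congr {σ : Sig} {Dom : Srt → Type} (M : HeapStructure σ Dom)
    (I1 I2 : Interp σ Dom) (φ : SLFormula σ) :
    ∀ (v : Assign Dom) (η : Set (Dom Srt.loc)),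
      (∀ Q zs η', η' ⊆ η → (I1 Q zs η' ↔ I2 Q zs η')) →
      (sat (M.reinterp I1) φ v η ↔ sat (M.reinterp I2) φ v η) := by
  induction φ with
  | eq t₁ t₂ => intro v η h; simp [sat, Term.eval_reinterp]
  | ne t₁ t₂ => intro v η h; simp [sat, Term.eval_reinterp]
  | thp Q args => intro v η h; simp [sat, Term.eval_reinterp]
  | nthp Q args => intro v η h; simp [sat, Term.eval_reinterp]
  | emp => intro v η h; simp [sat]
  | pointsTo t ts => intro v η h; simp [sat, Term.eval_reinterp]
  | indp P args =>
    intro v η h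
    simp only [sat, Term.eval_reinterp]
    exact h _ _ _ le_rfl
  | and φ ψ ih1 ih2 =>
    intro v η h
    exact and_congr (ih1 v η h) (ih2 v η h)
  | or φ ψ ih1 ih2 =>
    intro v η h
    exact or_congr (ih1 v η h) (ih2 v η h)
  | sep φ ψ ih1 ih2 =>
    intro v η h
    refine exists_congr fun η₁ => exists_congr fun η₂ => ?_
    constructor
    · rintro ⟨hu, hd, h1, h2⟩
      exact ⟨hu, hd,
        (ih1 v η₁ (fun Q zs η' hs => h Q zs η' (hs.trans (hu ▸ Set.subset_union_left)))).mp h1,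
        (ih2 v η₂ (fun Q zs η' hs => h Q zs η' (hs.trans (hu ▸ Set.subset_union_right)))).mp h2⟩
    · rintro ⟨hu, hd, h1, h2⟩
      exact ⟨hu, hd,
        (ih1 v η₁ (fun Q zs η' hs => h Q zs η' (hs.trans (hu ▸ Set.subset_union_left)))).mpr h1,
        (ih2 v η₂ (fun Q zs η' hs => h Q zs η' (hs.trans (hu ▸ Set.subset_union_right)))).mpr h2⟩
  | imp φ ψ ih1 ih2 =>
    intro v η h
    exact imp_congr (ih1 v η h) (ih2 v η h)
  | ex s x φ ih =>
    intro v η h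
    exact exists_congr fun d => ih _ η h
  | all s x φ ih =>
    intro v η h
    exact forall_congr' fun d => ih _ η h

/-- Monotonicity of satisfaction of quantifier-free conjunctive formulas in the
interpretation of inductive predicates (at sub-heaplets). -/
theorem sat_mono {σ : Sig} {Dom : Srt → Type} (M : HeapStructure σ Dom)
    (I1 I2 : Interp σ Dom) (φ : SLFormula σ) (hφ : φ.IsQFConj) :
    ∀ (v : Assign Dom) (η : Set (Dom Srt.loc)),
      (∀ Q zs η', η' ⊆ η → I1 Q zs η' → I2 Q zs η') →
      sat (M.reinterp I1) φ v η → sat (M.reinterp I2) φ v η := by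
  induction φ with
  | eq t₁ t₂ => intro v η h; simp [sat, Term.eval_reinterp]
  | ne t₁ t₂ => intro v η h; simp [sat, Term.eval_reinterp]
  | thp Q args => intro v η h; simp [sat, Term.eval_reinterp]
  | nthp Q args => intro v η h; simp [sat, Term.eval_reinterp]
  | emp => intro v η h; exact id
  | pointsTo t ts =>
    intro v η h
    exact (sat_noind M I1 I2 (.pointsTo t ts) (fun hx => hx) v η).mp
  | indp P args =>
    intro v η h
    simp only [sat, Term.eval_reinterp]
    exact h _ _ _ le_rfl
  | and φ ψ ih1 ih2 =>
    intro v η h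
    exact fun ⟨h1, h2⟩ => ⟨ih1 hφ.1 v η h h1, ih2 hφ.2 v η h h2⟩
  | or φ ψ ih1 ih2 => exact hφ.elim
  | sep φ ψ ih1 ih2 =>
    intro v η h
    rintro ⟨η₁, η₂, hu, hd, h1, h2⟩
    exact ⟨η₁, η₂, hu, hd,
      ih1 hφ.1 v η₁ (fun Q zs η' hs => h Q zs η' (hs.trans (hu ▸ Set.subset_union_left))) h1,
      ih2 hφ.2 v η₂ (fun Q zs η' hs => h Q zs η' (hs.trans (hu ▸ Set.subset_union_right))) h2⟩
  | imp φ ψ ih1 ih2 => exact hφ.elim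
  | ex s x φ ih => exact hφ.elim
  | all s x φ ih => exact hφ.elim

/-- Key lemma: over a heap-finite structure, the fixpoint interpretation of a
heap-reducing SID is below every fixpoint of the transformer. -/
theorem fp_min {σ : Sig} {Dom : Srt → Type} (Φ : SID σ) (hΦ : HeapReducing Φ)
    (M : HeapStructure σ Dom) (hfin : Finite (Dom Srt.loc)) (hfp : Φ.IsFP M)
    (I : Interp σ Dom) (hI : ∀ P xs η, I P xs η ↔ Φ.step M I P xs η) :
    ∀ P xs η, M.indI P xs η → I P xs η := by
  have key : ∀ n P xs (η : Set (Dom Srt.loc)), η.ncard = n → M.indI P xs η → I P xs η := by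
    intro n
    induction n using Nat.strong_induction_on with
    | _ n IH =>
    intro P xs η hcard hM
    obtain ⟨j, ys, hsat⟩ := (hfp P xs η).mp hM
    set v := Φ.asgn M.d0 P xs ys with hv
    have hsat2 : sat (M.reinterp I) (Φ.body P j) v η := by
      rcases hΦ P j with hno | ⟨t, ts, χ, hequiv⟩
      · exact (sat_noind M M.indI I _ hno v η).mp hsat
      · obtain ⟨η₁, η₂, hu, hd, hpt, hχ⟩ := (hequiv Dom (M.reinterp M.indI) v η).mp hsat
        obtain ⟨hne, hheap, hη₁⟩ := hpt
        set l := Term.eval (M.reinterp M.indI) v t with hl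
        have hlη₁ : l ∈ η₁ := by rw [hη₁]; exact rfl
        have hlη : l ∈ η := hu ▸ Set.mem_union_left _ hlη₁
        have hlη₂ : l ∉ η₂ := fun hmem =>
          Set.eq_empty_iff_forall_notMem.mp hd l ⟨hlη₁, hmem⟩
        set J : Interp σ Dom := fun Q zs η' => M.indI Q zs η' ∧ η' ≠ η with hJ
        have hχJ : sat (M.reinterp J) χ v η₂ := by
          refine (sat_reinterp_congr M M.indI J χ v η₂ ?_).mp hχ
          intro Q zs η' hsub
          have hne' : η' ≠ η := fun he => hlη₂ (hsub (he ▸ hlη))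
          simp [hJ, hne']
        have hptJ : sat (M.reinterp J) (.pointsTo t ts) v η₁ :=
          (sat_noind M M.indI J (.pointsTo t ts) (fun hx => hx) v η₁).mp ⟨hne, hheap, hη₁⟩
        have hbodyJ : sat (M.reinterp J) (Φ.body P j) v η :=
          (hequiv Dom (M.reinterp J) v η).mpr ⟨η₁, η₂, hu, hd, hptJ, hχJ⟩
        refine sat_mono M J I _ (Φ.body_conj P j) v η ?_ hbodyJ
        intro Q zs η' hsub hJ'
        have hss : η' ⊂ η := ssubset_of_subset_of_ne hsub hJ'.2
        have hlt : η'.ncard < n := hcard ▸ Set.ncard_lt_ncard hss (Set.toFinite η)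
        exact IH _ hlt Q zs η' rfl hJ'.1
    exact (hI P xs η).mpr ⟨j, ys, hsat2⟩
  intro P xs η
  exact key η.ncard P xs η rfl
/-- Conclusion 6.3:
For a heap-reducing SID `Φ`, every rogue model of `Φ` — a structure in
`(M_WSL ∩ M_fp(Φ)) ∖ (M_SL ∩ M_lfp(Φ))` — lies in `(M_WSL ∖ M_SL) ∩ M_fp(Φ)`;
and if such a rogue model extends the standard model of the background theory,
its location domain must be infinite. -/
theorem rogue_models_infinite (σ : Sig) (T : BackgroundTheory σ) (Φ : SID σ)
    (hΦ : HeapReducing Φ) (Dom : Srt → Type) (M : HeapStructure σ Dom)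
    (hrogue : (InWSL T M ∧ Φ.IsFP M) ∧ ¬ (InSL T M ∧ Φ.IsLFP M)) :
    ((InWSL T M ∧ ¬ InSL T M) ∧ Φ.IsFP M) ∧
    (ExtendsStd T M → Infinite (Dom Srt.loc)) := by
  obtain ⟨⟨hW, hfp⟩, hnot⟩ := hrogue
  have hnotSL : ¬ InSL T M := by
    intro hSL
    exact hnot ⟨hSL, hfp, fun I hI => fp_min Φ hΦ M hSL.2.1 hfp I hI⟩
  refine ⟨⟨⟨hW, hnotSL⟩, hfp⟩, fun hext => ?_⟩
  rw [← not_finite_iff_infinite]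
  intro hfin
  exact hnotSL ⟨hW.1, hfin, hext⟩

end WSLPaper
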